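/- Let s·I_m ⊆ L(A) for a full column rank A ∈ ℤ^{n×m} and s ∈ ℤ_{>0} (i.e., every row of s·I_m is a ℤ-linear combination of rows of A). Then the canonical lift to ℤ (with entries in [0, s²)) of the Howell form of A over ℤ/(s²) equals the Hermite form of A over ℤ. -/

import Mathlib

/-- `v` lies in the row lattice of `M`, i.e. `v = q * M` for some integer row `q`. -/
def inRowLattice {l m : Type*} [Fintype l] (M : Matrix l m ℤ) (v : m → ℤ) : Prop :=
  ∃ q : l → ℤ, v = Matrix.vecMul q M

/-- The integer relations lattice `R(M,F) = { p | p*F = 0 mod M }`. -/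
def relLattice {l n m : Type*} [Fintype l] [Fintype n] (M : Matrix l m ℤ)
    (F : Matrix n m ℤ) : Set (n → ℤ) :=
  { p | inRowLattice M (Matrix.vecMul p F) }

/-- A square integer matrix in (row) Hermite form. -/
def IsHermiteForm {k : ℕ} (H : Matrix (Fin k) (Fin k) ℤ) : Prop :=
  (∀ i j : Fin k, (j : ℕ) < (i : ℕ) → H i j = 0) ∧ (∀ i, 0 < H i i) ∧
    ∀ i j : Fin k, (i : ℕ) < (j : ℕ) → 0 ≤ H i j ∧ H i j < H j j

/-- `P` is a basis of the lattice `L`: nonsingular and its row lattice equals `L`. -/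
def IsBasisOf {n : ℕ} (P : Matrix (Fin n) (Fin n) ℤ) (L : Set (Fin n → ℤ)) : Prop :=
  P.det ≠ 0 ∧ ∀ v, inRowLattice P v ↔ v ∈ L

/-- A nonsingular diagonal matrix in Smith form (positive diagonal, divisibility chain). -/
def IsSmithForm {m : ℕ} (S : Matrix (Fin m) (Fin m) ℤ) : Prop :=
  (∀ i j : Fin m, i ≠ j → S i j = 0) ∧ (∀ i, 0 < S i i) ∧
    ∀ i j : Fin m, i ≤ j → S i i ∣ S j j

/-- `S` is the Smith normal form of `M`. -/
def IsSmithFormOf {m : ℕ} (S M : Matrix (Fin m) (Fin m) ℤ) : Prop :=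
  IsSmithForm S ∧ ∃ U V : Matrix (Fin m) (Fin m) ℤ,
    IsUnit U.det ∧ IsUnit V.det ∧ U * M * V = S

section Stmt15Aux

variable {m : ℕ}

lemma vecMul_apply' {l : ℕ} {R : Type*} [CommRing R] (q : Fin l → R)
    (M : Matrix (Fin l) (Fin m) R) (k : Fin m) :
    Matrix.vecMul q M k = ∑ i, q i * M i k := by
  simp [Matrix.vecMul, dotProduct]

lemma inRowLattice_iff_span {l : ℕ} (M : Matrix (Fin l) (Fin m) ℤ) (v : Fin m → ℤ) :
    inRowLattice M v ↔ v ∈ Submodule.span ℤ (Set.range M) := by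
  rw [show Set.range M = Set.range M.row from rfl, ← range_vecMulLinear]
  constructor
  · rintro ⟨q, rfl⟩; exact ⟨q, rfl⟩
  · rintro ⟨q, rfl⟩; exact ⟨q, rfl⟩

lemma vecMul_mem_span {l : ℕ} (M : Matrix (Fin l) (Fin m) ℤ) (q : Fin l → ℤ) :
    Matrix.vecMul q M ∈ Submodule.span ℤ (Set.range M) := by
  rw [show Set.range M = Set.range M.row from rfl, ← range_vecMulLinear]; exact ⟨q, rfl⟩

lemma cast_mem_span (N : ℕ) {l : ℕ} (M : Matrix (Fin l) (Fin m) ℤ) (v : Fin m → ℤ)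
    (h : v ∈ Submodule.span ℤ (Set.range M)) :
    (fun k => ((v k : ZMod N))) ∈ Submodule.span (ZMod N)
      (Set.range fun i => (M.map (Int.cast : ℤ → ZMod N)) i) := by
  rw [← inRowLattice_iff_span] at h
  obtain ⟨q, rfl⟩ := h
  have : (Set.range fun i => (M.map (Int.cast : ℤ → ZMod N)) i)
      = Set.range (M.map (Int.cast : ℤ → ZMod N)) := rfl
  rw [this, show Set.range (M.map (Int.cast : ℤ → ZMod N)) =
    Set.range (M.map (Int.cast : ℤ → ZMod N)).row from rfl, ← range_vecMulLinear]
  refine ⟨fun i => ((q i : ZMod N)), ?_⟩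
  funext k
  simp only [Matrix.vecMulLinear_apply]
  rw [vecMul_apply', vecMul_apply']
  push_cast [Matrix.map_apply]
  rfl

lemma exists_int_lift (N : ℕ) {l : ℕ} (M : Matrix (Fin l) (Fin m) ℤ) (S : Set (Fin l))
    (v : Fin m → ℤ)
    (h : (fun k => ((v k : ZMod N))) ∈ Submodule.span (ZMod N)
      ((fun i => (M.map (Int.cast : ℤ → ZMod N)) i) '' S)) :
    ∃ c : Fin l → ℤ, (∀ i, i ∉ S → c i = 0) ∧
      ∀ k, ((N : ℤ)) ∣ v k - Matrix.vecMul c M k := by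
  rw [Submodule.mem_span_set'] at h
  obtain ⟨t, f, g, hfg⟩ := h
  have hg : ∀ i : Fin t, ∃ x, x ∈ S ∧ (M.map (Int.cast : ℤ → ZMod N)) x = (g i : Fin m → ZMod N) := by
    intro i
    obtain ⟨x, hx, hx'⟩ := (g i).2
    exact ⟨x, hx, hx'⟩
  choose a ha hrow using hg
  choose b hb using fun i : Fin t => ZMod.intCast_surjective (n := N) (f i)
  refine ⟨∑ i, b i • Pi.single (a i) (1 : ℤ), ?_, ?_⟩
  · intro idx hidx
    rw [Finset.sum_apply]
    apply Finset.sum_eq_zero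
    intro i _
    have hne : idx ≠ a i := fun hcontra => hidx (hcontra ▸ ha i)
    simp [Pi.single_eq_of_ne hne]
  · intro k
    rw [← ZMod.intCast_zmod_eq_zero_iff_dvd, Int.cast_sub, sub_eq_zero]
    have hlin : Matrix.vecMul (∑ i, b i • Pi.single (a i) (1 : ℤ)) M
        = ∑ i, b i • Matrix.vecMul (Pi.single (a i) (1 : ℤ)) M := by
      rw [show ∀ c, Matrix.vecMul c M = M.vecMulLinear c from fun _ => rfl]
      rw [map_sum]
      exact Finset.sum_congr rfl fun i _ => by rw [map_smul]; rfl
    have hsingle : ∀ i : Fin t, Matrix.vecMul (Pi.single (a i) (1 : ℤ)) M = M (a i) := by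
      intro i
      funext k'
      rw [vecMul_apply']
      simp [Pi.single_apply]
    have hvk : ((v k : ZMod N)) = ∑ i, f i * ((M (a i) k : ZMod N)) := by
      have := congrFun hfg k
      rw [← this, Finset.sum_apply]
      refine (Finset.sum_congr rfl fun i _ => ?_)
      have := congrFun (hrow i) k
      rw [Pi.smul_apply, smul_eq_mul, ← this, Matrix.map_apply]
    rw [hvk, hlin, Finset.sum_apply]
    push_cast
    refine Finset.sum_congr rfl fun i _ => ?_
    rw [Pi.smul_apply, hsingle i, smul_eq_mul]
    push_cast
    rw [hb i]

lemma span_of_dvd_sub {l : ℕ} (N : ℤ) (M : Matrix (Fin l) (Fin m) ℤ) (v : Fin m → ℤ)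
    (c : Fin l → ℤ)
    (hdvd : ∀ k, N ∣ v k - Matrix.vecMul c M k)
    (hN : ∀ j : Fin m, (fun k => if k = j then N else 0) ∈ Submodule.span ℤ (Set.range M)) :
    v ∈ Submodule.span ℤ (Set.range M) := by
  have hv : v = Matrix.vecMul c M
      + ∑ j : Fin m, ((v j - Matrix.vecMul c M j) / N) • (fun k => if k = j then N else 0) := by
    funext k
    rw [Pi.add_apply, Finset.sum_apply]
    have : ∀ j : Fin m, (((v j - Matrix.vecMul c M j) / N) • fun k' => if k' = j then N else 0) k
        = if k = j then ((v j - Matrix.vecMul c M j) / N) * N else 0 := by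
      intro j
      rw [Pi.smul_apply, smul_eq_mul, mul_ite, mul_zero]
    simp_rw [this]
    rw [Finset.sum_ite_eq Finset.univ k (fun j => ((v j - Matrix.vecMul c M j) / N) * N),
      if_pos (Finset.mem_univ k), Int.ediv_mul_cancel (hdvd k)]
    ring
  rw [hv]
  exact Submodule.add_mem _ (vecMul_mem_span M c)
    (Submodule.sum_mem _ fun j _ => Submodule.smul_mem _ _ (hN j))

lemma sq_single_mem_span (s : ℕ) (hs : 0 < s) (B : Matrix (Fin m) (Fin m) ℤ)
    (htri : ∀ i j : Fin m, (j : ℕ) < (i : ℕ) → B i j = 0)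
    (hpiv : ∀ i, B i i ≠ 0 ∧ B i i ∣ (s : ℤ) ^ 2)
    (hhowell : ∀ j : Fin m, ∀ v ∈ Submodule.span (ZMod (s ^ 2))
        (Set.range fun i => (B.map (Int.cast : ℤ → ZMod (s ^ 2))) i),
      (∀ j' : Fin m, (j' : ℕ) < (j : ℕ) → v j' = 0) →
        v ∈ Submodule.span (ZMod (s ^ 2))
          ((fun i => (B.map (Int.cast : ℤ → ZMod (s ^ 2))) i) ''
            {i : Fin m | (j : ℕ) ≤ (i : ℕ)})) :
    ∀ j : Fin m, (fun k => if k = j then ((s : ℤ) ^ 2) else 0)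
      ∈ Submodule.span ℤ (Set.range B) := by
  suffices H : ∀ t : ℕ, ∀ j : Fin m, m - (j : ℕ) ≤ t →
      (fun k => if k = j then ((s : ℤ) ^ 2) else 0) ∈ Submodule.span ℤ (Set.range B) by
    intro j; exact H m j (by omega)
  intro t
  induction t with
  | zero => intro j hj; exact absurd hj (by have := j.2; omega)
  | succ t ih =>
    intro j hj
    have hdvd : B j j ∣ (s : ℤ) ^ 2 := (hpiv j).2
    set v : Fin m → ℤ := fun k => ((s : ℤ) ^ 2 / B j j) * B j k with hvdef
    have hvj : v j = (s : ℤ) ^ 2 := Int.ediv_mul_cancel hdvd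
    have hvlt : ∀ k : Fin m, (k : ℕ) < (j : ℕ) → v k = 0 := by
      intro k hk
      show _ * B j k = 0
      rw [htri j k hk, mul_zero]
    have hvmem : v ∈ Submodule.span ℤ (Set.range B) := by
      have hveq : v = ((s : ℤ) ^ 2 / B j j) • B j := by
        funext k; rw [Pi.smul_apply, smul_eq_mul]
      rw [hveq]
      exact Submodule.smul_mem _ _ (Submodule.subset_span ⟨j, rfl⟩)
    by_cases htop : (j : ℕ) + 1 < m
    · set j1 : Fin m := ⟨(j : ℕ) + 1, htop⟩ with hj1
      have hcast := cast_mem_span (s ^ 2) B v hvmem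
      have hzero : ∀ j' : Fin m, (j' : ℕ) < (j1 : ℕ) → ((v j' : ZMod (s ^ 2))) = 0 := by
        intro j' hj'
        have hj'le : (j' : ℕ) ≤ (j : ℕ) := by
          simp only [hj1] at hj'; omega
        rcases lt_or_eq_of_le hj'le with h | h
        · rw [hvlt j' h]; exact Int.cast_zero
        · have hj'eq : j' = j := Fin.ext h
          subst hj'eq
          rw [hvj]
          have : (((s : ℤ) ^ 2 : ℤ) : ZMod (s ^ 2)) = (((s ^ 2 : ℕ) : ℤ) : ZMod (s ^ 2)) := by
            push_cast; ring
          rw [this, Int.cast_natCast, ZMod.natCast_self]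
      have hmem := hhowell j1 _ hcast hzero
      obtain ⟨c, hcsupp, hcdvd⟩ := exists_int_lift (s ^ 2) B _ v hmem
      have hcdvd' : ∀ k, ((s : ℤ) ^ 2) ∣ v k - Matrix.vecMul c B k := by
        intro k
        have := hcdvd k
        have hNat : (((s ^ 2 : ℕ) : ℤ)) = (s : ℤ) ^ 2 := by push_cast; ring
        rwa [hNat] at this
      have hcB : ∀ k : Fin m, (k : ℕ) ≤ (j : ℕ) → Matrix.vecMul c B k = 0 := by
        intro k hk
        rw [vecMul_apply']
        apply Finset.sum_eq_zero
        intro i _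
        by_cases hi : i ∈ {i : Fin m | (j1 : ℕ) ≤ (i : ℕ)}
        · have : (k : ℕ) < (i : ℕ) := by
            simp only [Set.mem_setOf_eq, hj1] at hi; omega
          rw [htri i k this, mul_zero]
        · rw [hcsupp i hi, zero_mul]
      have heq : (fun k => if k = j then ((s : ℤ) ^ 2) else 0)
          = v - Matrix.vecMul c B
            - ∑ k ∈ Finset.univ.filter (fun k : Fin m => (j : ℕ) < (k : ℕ)),
              ((v k - Matrix.vecMul c B k) / (s : ℤ) ^ 2) •
                (fun k' => if k' = k then ((s : ℤ) ^ 2) else 0) := by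
        funext k'
        rw [Pi.sub_apply, Pi.sub_apply, Finset.sum_apply]
        have hterm : ∀ k : Fin m,
            (((v k - Matrix.vecMul c B k) / (s : ℤ) ^ 2) •
              fun k'' => if k'' = k then ((s : ℤ) ^ 2) else 0) k'
            = if k' = k then ((v k - Matrix.vecMul c B k) / (s : ℤ) ^ 2) * (s : ℤ) ^ 2 else 0 := by
          intro k
          rw [Pi.smul_apply, smul_eq_mul, mul_ite, mul_zero]
        simp_rw [hterm]
        rw [Finset.sum_ite_eq (Finset.univ.filter (fun k : Fin m => (j : ℕ) < (k : ℕ))) k'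
          (fun k => ((v k - Matrix.vecMul c B k) / (s : ℤ) ^ 2) * (s : ℤ) ^ 2)]
        rcases Nat.lt_trichotomy (k' : ℕ) (j : ℕ) with h | h | h
        · rw [if_neg (by intro hcon; rw [hcon] at h; omega),
            if_neg (by simp; omega), hvlt k' h, hcB k' (le_of_lt h)]
          ring
        · have hk'eq : k' = j := Fin.ext h
          subst hk'eq
          rw [if_pos rfl, if_neg (by simp), hvj, hcB k' le_rfl]
          ring
        · rw [if_neg (by intro hcon; rw [hcon] at h; omega),
            if_pos (by simp; omega), Int.ediv_mul_cancel (hcdvd' k')]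
          ring
      rw [heq]
      refine Submodule.sub_mem _ (Submodule.sub_mem _ hvmem (vecMul_mem_span B c))
        (Submodule.sum_mem _ fun k hk => Submodule.smul_mem _ _ ?_)
      have hkj : (j : ℕ) < (k : ℕ) := by simpa using hk
      exact ih k (by have := k.2; omega)
    · have hall : ∀ k : Fin m, (k : ℕ) ≤ (j : ℕ) := by
        intro k; have := k.2; omega
      have hveq2 : (fun k => if k = j then ((s : ℤ) ^ 2) else 0) = v := by
        funext k
        rcases lt_or_eq_of_le (hall k) with h | h
        · rw [if_neg (by intro hcon; rw [hcon] at h; omega), hvlt k h]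
        · have : k = j := Fin.ext h
          subst this
          rw [if_pos rfl, hvj]
      rw [hveq2]
      exact hvmem

end Stmt15Aux

theorem stmt15 {n m : ℕ} (A : Matrix (Fin n) (Fin m) ℤ)
    (hA : LinearIndependent ℤ (fun j : Fin m => fun i : Fin n => A i j))
    (s : ℕ) (hs : 0 < s)
    (hsI : ∀ j : Fin m, inRowLattice A ((s : ℤ) • (1 : Matrix (Fin m) (Fin m) ℤ) j))
    (B : Matrix (Fin m) (Fin m) ℤ)
    -- canonical lift: entries in [0, s²)
    (hrange : ∀ i j, 0 ≤ B i j ∧ B i j < (s : ℤ) ^ 2)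
    -- Howell form of A over ℤ/(s²): echelon (upper triangular with pivot of row i in column i)
    (htri : ∀ i j : Fin m, (j : ℕ) < (i : ℕ) → B i j = 0)
    (hpiv : ∀ i, B i i ≠ 0 ∧ B i i ∣ (s : ℤ) ^ 2)
    (hred : ∀ i j : Fin m, (i : ℕ) < (j : ℕ) → B i j < B j j)
    -- same row span over ℤ/(s²) as A
    (hspan : Submodule.span (ZMod (s ^ 2))
        (Set.range fun i => (B.map (Int.cast : ℤ → ZMod (s ^ 2))) i) =
      Submodule.span (ZMod (s ^ 2))
        (Set.range fun i => (A.map (Int.cast : ℤ → ZMod (s ^ 2))) i))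
    -- Howell property
    (hhowell : ∀ j : Fin m, ∀ v ∈ Submodule.span (ZMod (s ^ 2))
        (Set.range fun i => (B.map (Int.cast : ℤ → ZMod (s ^ 2))) i),
      (∀ j' : Fin m, (j' : ℕ) < (j : ℕ) → v j' = 0) →
        v ∈ Submodule.span (ZMod (s ^ 2))
          ((fun i => (B.map (Int.cast : ℤ → ZMod (s ^ 2))) i) ''
            {i : Fin m | (j : ℕ) ≤ (i : ℕ)})) :
    IsHermiteForm B ∧ ∀ v : Fin m → ℤ, inRowLattice B v ↔ inRowLattice A v := by
  constructor
  · exact ⟨htri, fun i => lt_of_le_of_ne (hrange i i).1 (Ne.symm (hpiv i).1),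
      fun i j hij => ⟨(hrange i j).1, hred i j hij⟩⟩
  · have hBk := sq_single_mem_span s hs B htri hpiv hhowell
    have hAk : ∀ j : Fin m, (fun k => if k = j then ((s : ℤ) ^ 2) else 0)
        ∈ Submodule.span ℤ (Set.range A) := by
      intro j
      obtain ⟨q, hq⟩ := hsI j
      have heq : (fun k => if k = j then ((s : ℤ) ^ 2) else 0)
          = Matrix.vecMul ((s : ℤ) • q) A := by
        funext k
        rw [vecMul_apply']
        have h2 : ∑ i, ((s : ℤ) • q) i * A i k = (s : ℤ) * ∑ i, q i * A i k := by
          rw [Finset.mul_sum]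
          exact Finset.sum_congr rfl fun i _ => by rw [Pi.smul_apply, smul_eq_mul]; ring
        rw [h2, ← vecMul_apply', ← hq]
        have h3 : ((s : ℤ) • (1 : Matrix (Fin m) (Fin m) ℤ) j) k
            = if j = k then (s : ℤ) else 0 := by
          rw [Pi.smul_apply, Matrix.one_apply, smul_eq_mul, mul_ite, mul_one, mul_zero]
        rw [h3, mul_ite, mul_zero]
        by_cases hkj : k = j
        · subst hkj; rw [if_pos rfl, if_pos rfl]; ring
        · rw [if_neg hkj, if_neg fun h => hkj h.symm]
      rw [heq]
      exact vecMul_mem_span A _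
    intro v
    rw [inRowLattice_iff_span, inRowLattice_iff_span]
    constructor
    · intro hvB
      have hcast := cast_mem_span (s ^ 2) B v hvB
      rw [hspan] at hcast
      obtain ⟨q, -, hq⟩ := exists_int_lift (s ^ 2) A Set.univ v (by rwa [Set.image_univ])
      refine span_of_dvd_sub ((s : ℤ) ^ 2) A v q ?_ hAk
      intro k
      have := hq k
      have hNat : (((s ^ 2 : ℕ) : ℤ)) = (s : ℤ) ^ 2 := by push_cast; ring
      rwa [hNat] at this
    · intro hvA
      have hcast := cast_mem_span (s ^ 2) A v hvA
      rw [← hspan] at hcast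
      obtain ⟨c, -, hc⟩ := exists_int_lift (s ^ 2) B Set.univ v (by rwa [Set.image_univ])
      refine span_of_dvd_sub ((s : ℤ) ^ 2) B v c ?_ hBk
      intro k
      have := hc k
      have hNat : (((s ^ 2 : ℕ) : ℤ)) = (s : ℤ) ^ 2 := by push_cast; ring
      rwa [hNat] at this
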